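/- arXiv:1509.08570 — 3 statements merged into one kernel-verified Lean document; each statement's English description precedes it below -/
import Mathlib

section
/- Fix integers b ≥ 2, s, m ≥ 1 and let 𝒫 be the digital net over ℤ_b in G^s with generating matrices C_1, …, C_s ∈ ℤ_b^{ℕ×m}. Then the b-adic antithetic sampling 𝒫_bant of 𝒫 coincides, as a multiset of b^{m+1} points of G^s, with the digital net over ℤ_b in G^s with generating matrices D_1, …, D_s ∈ ℤ_b^{ℕ×(m+1)}, where D_j is obtained from C_j by appending the all-ones column (1,1,…)ᵀ as the (m+1)-st column. -/
/-!
Every index below `b ^ (m + 1)` is uniquely `h + b ^ m * l` with `h < b ^ m` and `l < b`, and its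
`b`-adic digits are those of `h` followed by `l`. Hence in the net generated by `D_j = (C_j | 1)`
the first `m` columns produce `𝐳_h` and the appended all-ones column adds `l · (1, 1, …) = e_l`.
-/

open MeasureTheory

noncomputable section

/-- the `i`-th `b`-adic digit of the natural number `k`. -/
def bdig (b k i : ℕ) : ℕ := k / b ^ i % b

/-- the `k`-th `b`-adic character `χ_k` on `G = ∏_{i ≥ 1} ℤ_b`,
`χ_k(z) = ω_b^{κ_0 ζ_1 + κ_1 ζ_2 + ⋯}` where `ω_b = exp(2π√-1/b)`. -/
def gchar (b k : ℕ) (z : ℕ → ZMod b) : ℂ :=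
  Complex.exp (2 * Real.pi * Complex.I / b) ^ ∑ i ∈ Finset.range k, bdig b k i * (z i).val

/-- the `𝐤`-th character on `G^s`, `χ_𝐤(𝐳) = ∏_j χ_{k_j}(z_j)`. -/
def gcharV (b : ℕ) {s : ℕ} (k : Fin s → ℕ) (z : Fin s → ℕ → ZMod b) : ℂ :=
  ∏ j, gchar b (k j) (z j)

/-- the projection map `π : G → [0,1]`, `π(z) = ∑_{i ≥ 1} ζ_i b^{-i}`. -/
def gproj (b : ℕ) (z : ℕ → ZMod b) : ℝ := ∑' i, (z i).val / (b : ℝ) ^ (i + 1)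

/-- the section map `σ : [0,1] → G`, sending `x` to its sequence of `b`-adic digits
(`ξ_i = ⌊b^i x⌋ mod b` for `x < 1`, and all digits `b - 1` for `x = 1`). -/
def gsect (b : ℕ) (x : ℝ) : ℕ → ZMod b := fun i =>
  if x < 1 then ((⌊(b : ℝ) ^ (i + 1) * x⌋ : ℤ) : ZMod b) else -1

/-- the equi-probability (uniform) measure on `ZMod b`. -/
def unifZMod (b : ℕ) : Measure (ZMod b) := (b : ENNReal)⁻¹ • Measure.count

/-- `μ` is the product probability measure `μ̃` on `G = ∏_{i ≥ 1} ℤ_b` induced by the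
uniform measure on `ℤ_b`, characterized as the projective limit of the finite products
of the uniform measure on `ZMod b`. -/
def IsProductUniform (b : ℕ) (μ : Measure (ℕ → ZMod b)) : Prop :=
  IsProjectiveLimit μ (fun J : Finset ℕ => Measure.pi (fun _ : J => unifZMod b))

/-- the `h`-th point `𝐳_h` of the digital net over `ℤ_b` in `G^s` with generating
matrices `C j : ℕ → Fin m → ZMod b` (`h` with `b`-adic digits `η_0, …, η_{m-1}`,
`z_{h,j}ᵀ = C_j ⬝ (η_0, …, η_{m-1})ᵀ`). -/
def digNet (b : ℕ) {m s : ℕ} (C : Fin s → ℕ → Fin m → ZMod b) (h : ℕ) :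
    Fin s → ℕ → ZMod b :=
  fun j i => ∑ r : Fin m, ((bdig b h r : ℕ) : ZMod b) * C j i r

/-- the product `k⃗ C` of the (finitely supported) `b`-adic digit vector
`k⃗ = (κ_0, κ_1, …)` of `k` with the matrix `C : ℕ → Fin m → ZMod b`. -/
def digitVecMul (b : ℕ) {m : ℕ} (k : ℕ) (C : ℕ → Fin m → ZMod b) : Fin m → ZMod b :=
  fun r => ∑ i ∈ Finset.range k, ((bdig b k i : ℕ) : ZMod b) * C i r

/-- the dual net `𝒫^⊥ = {𝐤 ∈ ℕ^s : k⃗_1 C_1 ⊕ ⋯ ⊕ k⃗_s C_s = 0 ∈ ℤ_b^m}` of the digital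
net with generating matrices `C j`. -/
def dualNet (b : ℕ) {m s : ℕ} (C : Fin s → ℕ → Fin m → ZMod b) : Set (Fin s → ℕ) :=
  {k | ∑ j, digitVecMul b (k j) (C j) = 0}

/-- the sum-of-digits function `δ : ℕ → ℤ_b`, `δ(k) = ∑_i κ_i mod b`. -/
def ddelta (b k : ℕ) : ZMod b := ∑ i ∈ Finset.range k, ((bdig b k i : ℕ) : ZMod b)

/-- `δ(𝐤) = ∑_{j} δ(k_j) mod b` for a vector `𝐤 ∈ ℕ^s`. -/
def ddeltaV (b : ℕ) {s : ℕ} (k : Fin s → ℕ) : ZMod b := ∑ j, ddelta b (k j)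

theorem Multiset.range_mul_eq_map_product (n k : ℕ) :
    Multiset.range (n * k) =
      (Multiset.range k ×ˢ Multiset.range n).map (fun p => p.2 + n * p.1) := by
  induction k with
  | zero => simp
  | succ k ih =>
    rw [Nat.mul_succ, Multiset.range_add, ih, Multiset.range_succ, Multiset.cons_product,
      Multiset.map_add, Multiset.map_map, add_comm]
    simp only [Function.comp_def, add_comm]

lemma bdig_add_pow_mul_of_lt {b m r : ℕ} (hb : 0 < b) (hr : r < m) (h l : ℕ) :
    bdig b (h + b ^ m * l) r = bdig b h r := by
  have hsplit : b ^ m * l = b ^ r * (b * (b ^ (m - r - 1) * l)) := by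
    rw [← mul_assoc, ← mul_assoc, ← pow_succ, ← pow_add]
    congr 2
    omega
  rw [bdig, hsplit, Nat.add_mul_div_left _ _ (pow_pos hb r), Nat.add_mul_mod_self_left, bdig]

lemma bdig_add_pow_mul_self {b m h l : ℕ} (hh : h < b ^ m) (hl : l < b) :
    bdig b (h + b ^ m * l) m = l := by
  rw [bdig, Nat.add_mul_div_left _ _ (by omega), Nat.div_eq_of_lt hh, zero_add,
    Nat.mod_eq_of_lt hl]

lemma digNet_snoc_add_pow_mul {b m s h l : ℕ} (hh : h < b ^ m) (hl : l < b)
    (C : Fin s → ℕ → Fin m → ZMod b) (v : Fin s → ℕ → ZMod b) (j : Fin s) (i : ℕ) :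
    digNet b (fun j i => Fin.snoc (C j i) (v j i)) (h + b ^ m * l) j i =
      digNet b C h j i + l * v j i := by
  simp only [digNet]
  rw [Fin.sum_univ_castSucc, Fin.snoc_last, Fin.val_last, bdig_add_pow_mul_self hh hl]
  congr 1
  refine Finset.sum_congr rfl fun r _ => ?_
  rw [Fin.snoc_castSucc, Fin.val_castSucc, bdig_add_pow_mul_of_lt (by omega) r.isLt]

theorem antithetic_eq_digNet_general (b : ℕ) (s m : ℕ)
    (C : Fin s → ℕ → Fin m → ZMod b)
    (D : Fin s → ℕ → Fin (m + 1) → ZMod b)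
    (hD : ∀ j i, D j i = Fin.snoc (C j i) 1) :
    (Multiset.range (b ^ (m + 1))).map (fun h => digNet b D h) =
      ((Multiset.range b) ×ˢ (Multiset.range (b ^ m))).map
        (fun p => fun j i => digNet b C p.2 j i + ((p.1 : ℕ) : ZMod b)) := by
  obtain rfl : D = fun j i => Fin.snoc (C j i) 1 := funext₂ hD
  rw [pow_succ, Multiset.range_mul_eq_map_product, Multiset.map_map]
  refine Multiset.map_congr rfl fun p hp => ?_
  rw [Multiset.mem_product, Multiset.mem_range, Multiset.mem_range] at hp
  funext j i
  rw [Function.comp_apply, digNet_snoc_add_pow_mul hp.2 hp.1, mul_one]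

/-- the `b`-adic antithetic sampling `𝒫_bant = (𝐳_h ⊕ 𝐞_l)_{0 ≤ h < b^m, l ∈ ℤ_b}`
of the digital net `𝒫` with generating matrices `C_1, …, C_s ∈ ℤ_b^{ℕ×m}` coincides, as a
multiset of `b^{m+1}` points of `G^s`, with the digital net with generating matrices
`D_j = (C_j | (1,1,…)ᵀ) ∈ ℤ_b^{ℕ×(m+1)}`. -/
theorem antithetic_eq_digNet (b : ℕ) (hb : 2 ≤ b) (s m : ℕ) (hs : 1 ≤ s) (hm : 1 ≤ m)
    (C : Fin s → ℕ → Fin m → ZMod b)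
    (D : Fin s → ℕ → Fin (m + 1) → ZMod b)
    (hD : ∀ j i, D j i = Fin.snoc (C j i) 1) :
    (Multiset.range (b ^ (m + 1))).map (fun h => digNet b D h) =
      ((Multiset.range b) ×ˢ (Multiset.range (b ^ m))).map
        (fun p => fun j i => digNet b C p.2 j i + ((p.1 : ℕ) : ZMod b)) :=
  antithetic_eq_digNet_general b s m C D hD
end
end

section
/- Fix integers b ≥ 2, s, m ≥ 1 and let 𝒫 be the digital net over ℤ_b in G^s with generating matrices C_1, …, C_s ∈ ℤ_b^{ℕ×m}, with dual net 𝒫^⊥. Then the dual net of the b-adic antithetic sampling 𝒫_bant (viewed as the digital net with matrices D_j = (C_j | (1,1,…)ᵀ) ∈ ℤ_b^{ℕ×(m+1)}) satisfies 𝒫_bant^⊥ = 𝒫^⊥ ∩ {𝐤 ∈ ℕ^s : δ(𝐤) = 0}. -/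
open MeasureTheory

noncomputable section

/-- the dual net of the `b`-adic antithetic sampling `𝒫_bant` (the digital net
with matrices `D_j = (C_j | (1,1,…)ᵀ)`) satisfies `𝒫_bant^⊥ = 𝒫^⊥ ∩ {𝐤 : δ(𝐤) = 0}`. -/
theorem dualNet_antithetic (b : ℕ) (hb : 2 ≤ b) (s m : ℕ) (hs : 1 ≤ s) (hm : 1 ≤ m)
    (C : Fin s → ℕ → Fin m → ZMod b)
    (D : Fin s → ℕ → Fin (m + 1) → ZMod b)
    (hD : ∀ j i, D j i = Fin.snoc (C j i) 1) :
    dualNet b D = dualNet b C ∩ {k : Fin s → ℕ | ddeltaV b k = 0} := by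
  have key : ∀ (k : Fin s → ℕ) (r : Fin (m+1)),
      (∑ j, digitVecMul b (k j) (D j)) r =
      Fin.lastCases (ddeltaV b k) (fun t => (∑ j, digitVecMul b (k j) (C j)) t) r := by
    intro k r
    refine Fin.lastCases ?_ ?_ r
    · simp [digitVecMul, hD, Finset.sum_apply, ddeltaV, ddelta]
    · intro t
      simp [digitVecMul, hD, Finset.sum_apply]
  ext k
  simp only [dualNet, Set.mem_setOf_eq, Set.mem_inter_iff]
  constructor
  · intro h
    constructor
    · funext t
      have := congrFun h (Fin.castSucc t)
      rw [key] at this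
      simpa using this
    · have := congrFun h (Fin.last m)
      rw [key] at this
      simpa using this
  · rintro ⟨h1, h2⟩
    funext r
    rw [Pi.zero_apply, key]
    refine Fin.lastCases ?_ ?_ r
    · simpa using h2
    · intro t
      have := congrFun h1 t; simpa using this
end
end

section
/- Let b be a prime, s ≥ 1, and m, n ∈ ℕ with 1 ≤ m ≤ n. Let p ∈ ℤ_b[x] with deg(p) = n and 𝐪 = (q_1,…,q_s) ∈ (ℤ_b[x])^s with deg(q_j) < n for all j. Then the dual net of the higher order polynomial lattice point set 𝒫(p,𝐪) is 𝒫^⊥(p,𝐪) = {𝐤 = (k_1,…,k_s) ∈ ℕ^s : there exists a ∈ ℤ_b[x] with deg(a) < n − m such that tr_n(k_1) q_1 + ⋯ + tr_n(k_s) q_s ≡ a (mod p)}; equivalently, 𝐤 ∈ 𝒫^⊥(p,𝐪) iff the remainder of tr_n(k_1)q_1 + ⋯ + tr_n(k_s)q_s upon division by p has degree < n − m. -/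
open MeasureTheory

noncomputable section

/-- the coefficient `t_l` in the expansion `q(x)/p(x) = ∑_{l ≥ 1} t_l x^{-l}` in the field
of formal Laurent series `ℤ_b((x⁻¹))`: substituting `x = X⁻¹` and multiplying numerator
and denominator by `X^n` (`n = deg p`) turns `q(x)/p(x)` into the rational function
`reflect n q / reflect n p` of `X`, whose Laurent-series expansion at `X = 0` has
`t_l` as the coefficient of `X^l`. -/
def laurentCoeff (b : ℕ) [Fact b.Prime] (n : ℕ) (p q : Polynomial (ZMod b)) (l : ℕ) :
    ZMod b :=
  ((RatFunc.liftAlgHom (Algebra.ofId (Polynomial (ZMod b)) (LaurentSeries (ZMod b)))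
      (nonZeroDivisors_le_comap_nonZeroDivisors_of_injective _
        (Polynomial.algebraMap_hahnSeries_injective ℤ)))
      (algebraMap (Polynomial (ZMod b)) (RatFunc (ZMod b)) (q.reflect n) /
        algebraMap (Polynomial (ZMod b)) (RatFunc (ZMod b)) (p.reflect n))).coeff (l : ℤ)

/-- the generating matrix `C_j = (c^{(j)}_{l,r})` of the higher order polynomial lattice
point set: `c^{(j)}_{l,r} = t^{(j)}_{l+r-1}` for `l ≤ n`, and `0` otherwise (rows indexed
by `i = l - 1 : ℕ`, columns by `r - 1 : Fin m`). -/
def hoplMatrix (b : ℕ) [Fact b.Prime] (n m : ℕ) (p q : Polynomial (ZMod b)) :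
    ℕ → Fin m → ZMod b :=
  fun i r => if i + 1 ≤ n then laurentCoeff b n p q (i + 1 + (r : ℕ)) else 0

/-- the truncated polynomial `tr_n(k)(x) = κ_0 + κ_1 x + ⋯ + κ_{n-1} x^{n-1}` associated
with `k = κ_0 + κ_1 b + ⋯`. -/
def trPoly (b n k : ℕ) : Polynomial (ZMod b) :=
  ∑ i ∈ Finset.range n, Polynomial.C ((bdig b k i : ℕ) : ZMod b) * Polynomial.X ^ i

/-! Substituting `x = X⁻¹` turns the expansion of `q/p` in powers of `x⁻¹` into the power
series `Q/P` with `Q = reflect n q` and `P = reflect n p`. Column `r` of `∑_j k⃗_j C_j` then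
becomes the coefficient of `X^(n+r+1)` in `∑_j reflect n (tr_n k_j) · Q_j / P`, which is the
coefficient of `x^(-r-1)` in `F/p` for `F = ∑_j tr_n(k_j) q_j`. Dividing, `F = A p + R`, the
polynomial part `A` contributes no negative powers of `x`, so the `m` columns vanish iff
`R/p = O(x^(-m-1))`, i.e. iff `deg R < n - m`. -/

namespace Polynomial

variable {K : Type*} [Field K]

theorem reflect_sum {R ι : Type*} [Semiring R] (N : ℕ) (s : Finset ι) (f : ι → R[X]) :
    reflect N (∑ i ∈ s, f i) = ∑ i ∈ s, reflect N (f i) :=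
  map_sum (⟨⟨reflect N, reflect_zero⟩, fun f g => reflect_add f g N⟩ : R[X] →+ R[X]) f s

theorem coeff_zero_reflect_ne_zero {R : Type*} [Semiring R] {p : R[X]} {n : ℕ}
    (hp : p.degree = n) : (reflect n p).coeff 0 ≠ 0 := by
  rw [coeff_reflect, revAt_zero, ← natDegree_eq_of_degree_eq_some hp]
  exact leadingCoeff_ne_zero.mpr (ne_zero_of_coe_le_degree hp.ge)

theorem coe_reflect_mul_inv_cancel {p : K[X]} {n : ℕ} (hp : p.degree = n) :
    (reflect n p : PowerSeries K) * (reflect n p : PowerSeries K)⁻¹ = 1 := by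
  refine PowerSeries.mul_inv_cancel _ ?_
  rw [← PowerSeries.coeff_zero_eq_constantCoeff_apply, coeff_coe]
  exact coeff_zero_reflect_ne_zero hp

theorem natDegree_div_le_sub (f g : K[X]) : (f / g).natDegree ≤ f.natDegree - g.natDegree := by
  rcases eq_or_ne g 0 with rfl | hg
  · simp
  rw [div_def]
  refine (natDegree_C_mul_le _ _).trans_eq ?_
  rw [natDegree_divByMonic _ (monic_mul_leadingCoeff_inv hg),
    natDegree_mul_C (inv_ne_zero (leadingCoeff_ne_zero.mpr hg))]

theorem coeff_coe_reflect_mul {R : Type*} [CommSemiring R] {f : R[X]} {n : ℕ}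
    (hf : f.degree < n) (S : PowerSeries R) (d : ℕ) :
    PowerSeries.coeff (n + d) ((reflect n f : PowerSeries R) * S) =
      ∑ i ∈ Finset.range n, f.coeff i * PowerSeries.coeff (i + d) S := by
  rcases eq_or_ne f 0 with rfl | hf0
  · simp
  conv_lhs => rw [as_sum_range_C_mul_X_pow' f ((natDegree_lt_iff_degree_lt hf0).mpr hf)]
  rw [reflect_sum, ← coeToPowerSeries.ringHom_apply, map_sum, Finset.sum_mul, map_sum]
  refine Finset.sum_congr rfl fun i hi => ?_
  have hin : i ≤ n := (Finset.mem_range.mp hi).le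
  rw [reflect_C_mul_X_pow, revAt_le hin, coeToPowerSeries.ringHom_apply, coe_mul, coe_C,
    coe_pow, coe_X, mul_assoc, PowerSeries.coeff_C_mul,
    show n + d = i + d + (n - i) by omega, PowerSeries.coeff_X_pow_mul]

theorem X_pow_succ_dvd_coe_reflect_iff {R : Type*} [Semiring R] {f : R[X]} {n : ℕ}
    (hf : f.natDegree ≤ n) (k : ℕ) :
    PowerSeries.X ^ (k + 1) ∣ (reflect n f : PowerSeries R) ↔ f.degree < ↑(n - k) := by
  rw [PowerSeries.X_pow_dvd_iff, degree_lt_iff_coeff_zero]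
  simp only [coeff_coe, coeff_reflect]
  constructor
  · intro h i hi
    rcases le_or_gt i n with hin | hni
    · simpa [revAt_le (Nat.sub_le n i), Nat.sub_sub_self hin] using h (n - i) (by omega)
    · exact coeff_eq_zero_of_natDegree_lt (hf.trans_lt hni)
  · intro h l hl
    rcases le_or_gt l n with hln | hnl
    · exact (revAt_le hln).symm ▸ h (n - l) (by omega)
    · exact (revAt_eq_self_of_lt hnl).symm ▸ coeff_eq_zero_of_natDegree_lt (hf.trans_lt hnl)

theorem coeff_coe_reflect_mul_inv_eq_mod {p : K[X]} {n : ℕ} (hp : p.degree = n) {F : K[X]}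
    (hF : F.natDegree ≤ n + n) (d : ℕ) :
    PowerSeries.coeff (n + (d + 1))
        ((reflect (n + n) F : PowerSeries K) * (reflect n p : PowerSeries K)⁻¹) =
      PowerSeries.coeff (d + 1)
        ((reflect n (F % p) : PowerSeries K) * (reflect n p : PowerSeries K)⁻¹) := by
  have hp0 : p ≠ 0 := ne_zero_of_coe_le_degree hp.ge
  have hpn : p.natDegree = n := natDegree_eq_of_degree_eq_some hp
  set P : PowerSeries K := ↑(reflect n p : K[X])
  have hPP : P * P⁻¹ = 1 := coe_reflect_mul_inv_cancel hp
  set A := F / p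
  set R := F % p
  have hA : A.natDegree ≤ n := (natDegree_div_le_sub F p).trans (by omega)
  have hR : R.natDegree ≤ n :=
    natDegree_le_of_degree_le (hp ▸ degree_mod_lt F hp0).le
  -- `reflect n A` has degree `≤ n`, so it does not reach the coefficient of `X^(n + d + 1)`.
  have hrefl : reflect (n + n) F = reflect n p * reflect n A + reflect n R * X ^ n := by
    conv_lhs => rw [← EuclideanDomain.div_add_mod F p, ← mul_one (F % p)]
    rw [reflect_add, reflect_mul p A hpn.le hA, reflect_mul R 1 hR (by simp), reflect_one]
  have hexp : (reflect (n + n) F : PowerSeries K) * P⁻¹ =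
      (reflect n A : PowerSeries K) +
        PowerSeries.X ^ n * ((reflect n R : PowerSeries K) * P⁻¹) := by
    rw [hrefl, coe_add, coe_mul, coe_mul, coe_pow, coe_X]
    linear_combination (reflect n A : PowerSeries K) * hPP
  rw [hexp, map_add, show n + (d + 1) = d + 1 + n by omega, PowerSeries.coeff_X_pow_mul,
    coeff_coe, coeff_eq_zero_of_natDegree_lt
      ((natDegree_reflect_le.trans (max_le le_rfl hA)).trans_lt (by omega)), zero_add]

end Polynomial

theorem PowerSeries.X_pow_succ_dvd_iff {R : Type*} [Semiring R] {φ : PowerSeries R}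
    (hφ : constantCoeff φ = 0) (m : ℕ) :
    X ^ (m + 1) ∣ φ ↔ ∀ r < m, coeff (r + 1) φ = 0 := by
  rw [X_pow_dvd_iff, Nat.forall_lt_succ_left, coeff_zero_eq_constantCoeff_apply]
  exact and_iff_right hφ

theorem RatFunc.liftAlgHom_div_eq_coe_mul_inv {K : Type*} [Field K] (P Q : Polynomial K)
    (hP : P.coeff 0 ≠ 0) (hφ : nonZeroDivisors (Polynomial K) ≤
      (nonZeroDivisors (LaurentSeries K)).comap (Algebra.ofId (Polynomial K) (LaurentSeries K))) :
    RatFunc.liftAlgHom (Algebra.ofId (Polynomial K) (LaurentSeries K)) hφ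
        (algebraMap _ (RatFunc K) Q / algebraMap _ (RatFunc K) P) =
      HahnSeries.ofPowerSeries ℤ K ((Q : PowerSeries K) * (P : PowerSeries K)⁻¹) := by
  have hP' : PowerSeries.constantCoeff (P : PowerSeries K) ≠ 0 := by
    rwa [← PowerSeries.coeff_zero_eq_constantCoeff_apply, Polynomial.coeff_coe]
  have hPL : HahnSeries.ofPowerSeries ℤ K (P : PowerSeries K) ≠ 0 :=
    (map_ne_zero_iff _ HahnSeries.ofPowerSeries_injective).mpr
      (fun h => hP' (by rw [h, map_zero]))
  rw [RatFunc.liftAlgHom_apply_div]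
  change HahnSeries.ofPowerSeries ℤ K (Q : PowerSeries K) /
    HahnSeries.ofPowerSeries ℤ K (P : PowerSeries K) = _
  rw [div_eq_iff hPL, ← map_mul, mul_assoc, PowerSeries.inv_mul_cancel _ hP', mul_one]

section HigherOrderPolynomialLattice

variable {b : ℕ}

theorem bdig_eq_zero_of_le {k i : ℕ} (h : k ≤ i) : bdig b k i = 0 := by
  rcases Nat.lt_or_ge b 2 with hb | hb
  · interval_cases b <;> cases i <;> simp_all [bdig, Nat.mod_one]
  · simp [bdig, Nat.div_eq_of_lt (h.trans_lt (Nat.lt_pow_self hb))]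

theorem trPoly_coeff (n k i : ℕ) :
    (trPoly b n k).coeff i = if i < n then ((bdig b k i : ℕ) : ZMod b) else 0 := by
  simp [trPoly, Polynomial.finsetSum_coeff, Polynomial.coeff_X_pow]

theorem degree_trPoly_lt (n k : ℕ) : (trPoly b n k).degree < n := by
  rw [Polynomial.degree_lt_iff_coeff_zero]
  intro i hi
  simp [trPoly_coeff, Nat.not_lt.mpr hi]

variable [Fact b.Prime]

theorem laurentCoeff_eq_coeff {n : ℕ} {p : Polynomial (ZMod b)} (hp : p.degree = n)
    (q : Polynomial (ZMod b)) (l : ℕ) :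
    laurentCoeff b n p q l =
      PowerSeries.coeff l
        ((q.reflect n : PowerSeries (ZMod b)) * (p.reflect n : PowerSeries (ZMod b))⁻¹) := by
  rw [laurentCoeff, RatFunc.liftAlgHom_div_eq_coe_mul_inv _ _
    (Polynomial.coeff_zero_reflect_ne_zero hp),
    HahnSeries.ofPowerSeries_apply_coeff]

theorem digitVecMul_hoplMatrix {m : ℕ} (n : ℕ) (p q : Polynomial (ZMod b)) (k : ℕ)
    (r : Fin m) :
    digitVecMul b k (hoplMatrix b n m p q) r =
      ∑ i ∈ Finset.range n, (trPoly b n k).coeff i * laurentCoeff b n p q (i + (r + 1)) := by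
  have hk : Finset.range k ⊆ Finset.range (k + n) := Finset.range_subset_range.mpr (by omega)
  have hn : Finset.range n ⊆ Finset.range (k + n) := Finset.range_subset_range.mpr (by omega)
  refine (Finset.sum_subset hk ?_).trans
    ((Finset.sum_congr rfl fun i _ => ?_).trans (Finset.sum_subset hn ?_).symm)
  · intro i _ hi
    simp [bdig_eq_zero_of_le (Nat.not_lt.mp (Finset.mem_range.not.mp hi))]
  · by_cases hi : i < n
    · simp [hoplMatrix, trPoly_coeff, hi, Nat.succ_le_of_lt hi, add_assoc, add_comm 1]
    · simp [hoplMatrix, trPoly_coeff, hi]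
  · intro i _ hi
    simp [trPoly_coeff, Finset.mem_range.not.mp hi]

theorem sum_digitVecMul_hoplMatrix_eq_coeff_mod {s m n : ℕ} {p : Polynomial (ZMod b)} (hp : p.degree = n)
    {q : Fin s → Polynomial (ZMod b)} (hq : ∀ j, (q j).degree < n) (k : Fin s → ℕ)
    (r : Fin m) :
    ∑ j, digitVecMul b (k j) (hoplMatrix b n m p (q j)) r =
      PowerSeries.coeff ((r : ℕ) + 1)
        ((((∑ j, trPoly b n (k j) * q j) % p).reflect n : PowerSeries (ZMod b)) *
          (p.reflect n : PowerSeries (ZMod b))⁻¹) := by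
  have hdeg : ∀ f : Polynomial (ZMod b), f.degree < n → f.natDegree ≤ n :=
    fun f hf => Polynomial.natDegree_le_of_degree_le hf.le
  have hrefl : (∑ j, trPoly b n (k j) * q j).reflect (n + n) =
      ∑ j, (trPoly b n (k j)).reflect n * (q j).reflect n := by
    rw [Polynomial.reflect_sum]
    exact Finset.sum_congr rfl fun j _ => Polynomial.reflect_mul _ _
      (hdeg _ (degree_trPoly_lt n (k j))) (hdeg _ (hq j))
  have hF : (∑ j, trPoly b n (k j) * q j).natDegree ≤ n + n :=
    Polynomial.natDegree_sum_le_of_forall_le _ _ fun j _ => Polynomial.natDegree_mul_le.trans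
      (add_le_add (hdeg _ (degree_trPoly_lt n (k j))) (hdeg _ (hq j)))
  rw [← Polynomial.coeff_coe_reflect_mul_inv_eq_mod hp hF, hrefl,
    ← Polynomial.coeToPowerSeries.ringHom_apply, map_sum, Finset.sum_mul, map_sum]
  refine Finset.sum_congr rfl fun j _ => ?_
  simp_rw [digitVecMul_hoplMatrix, laurentCoeff_eq_coeff hp, map_mul,
    Polynomial.coeToPowerSeries.ringHom_apply, mul_assoc]
  exact (Polynomial.coeff_coe_reflect_mul (degree_trPoly_lt n _) _ _).symm

end HigherOrderPolynomialLattice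

theorem dualNet_hopl_general (b : ℕ) [Fact b.Prime] (s m n : ℕ)
    (p : Polynomial (ZMod b)) (hp : p.degree = (n : ℕ))
    (q : Fin s → Polynomial (ZMod b)) (hq : ∀ j, (q j).degree < (n : ℕ)) :
    dualNet b (fun j => hoplMatrix b n m p (q j)) =
      {k : Fin s → ℕ | ((∑ j, trPoly b n (k j) * q j) % p).degree < ((n - m : ℕ) : ℕ)} := by
  have hp0 : p ≠ 0 := Polynomial.ne_zero_of_coe_le_degree hp.ge
  ext k
  set R := (∑ j, trPoly b n (k j) * q j) % p
  have hR : R.degree < n := hp ▸ Polynomial.degree_mod_lt _ hp0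
  have hRn : R.natDegree ≤ n := Polynomial.natDegree_le_of_degree_le hR.le
  set P : PowerSeries (ZMod b) := ↑(p.reflect n : Polynomial (ZMod b))
  have hPinv : IsUnit P⁻¹ := IsUnit.of_mul_eq_one_right _ (Polynomial.coe_reflect_mul_inv_cancel hp)
  have hX : PowerSeries.X ∣ (R.reflect n : PowerSeries (ZMod b)) * P⁻¹ := by
    rw [hPinv.dvd_mul_right, ← pow_one PowerSeries.X,
      Polynomial.X_pow_succ_dvd_coe_reflect_iff hRn 0]
    exact hR
  simp only [dualNet, Set.mem_ofPred_eq, funext_iff, Finset.sum_apply, Pi.zero_apply,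
    sum_digitVecMul_hoplMatrix_eq_coeff_mod hp hq, Fin.forall_iff]
  rw [← PowerSeries.X_pow_succ_dvd_iff (PowerSeries.X_dvd_iff.mp hX), hPinv.dvd_mul_right,
    Polynomial.X_pow_succ_dvd_coe_reflect_iff hRn]

/-- for a prime `b`, `1 ≤ m ≤ n`, `p` of degree `n` and `q_j` of degree `< n`,
the dual net of the higher order polynomial lattice point set `𝒫(p,𝐪)` is
`𝒫^⊥(p,𝐪) = {𝐤 ∈ ℕ^s : deg((tr_n(k_1)q_1 + ⋯ + tr_n(k_s)q_s) mod p) < n - m}`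
(equivalently, `tr_n(k_1)q_1 + ⋯ + tr_n(k_s)q_s ≡ a (mod p)` for some `a` with
`deg(a) < n - m`). -/
theorem dualNet_hopl (b : ℕ) [Fact b.Prime] (s m n : ℕ) (hs : 1 ≤ s) (hm : 1 ≤ m)
    (hmn : m ≤ n) (p : Polynomial (ZMod b)) (hp : p.degree = (n : ℕ))
    (q : Fin s → Polynomial (ZMod b)) (hq : ∀ j, (q j).degree < (n : ℕ)) :
    dualNet b (fun j => hoplMatrix b n m p (q j)) =
      {k : Fin s → ℕ | ((∑ j, trPoly b n (k j) * q j) % p).degree < ((n - m : ℕ) : ℕ)} :=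
  dualNet_hopl_general b s m n p hp q hq
end
end
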